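/- Every binary phylogenetic network with reticulation number 1 (a tier-1 network) has at most two embedded trees, and if a tier-1 network contains a triangle, then it has exactly one embedded tree. -/

import Mathlib

/-!
An embedded tree of `N` comes with a subgraph `E'` of `N` that it subdivides. In `E'` every vertex
other than the root keeps a parent, and no vertex has two parents, so when `N` has a single
reticulation `r`, `E'` is `N` with one of the two in-edges of `r` deleted. The tree is determined
by `E'` up to isomorphism, because its vertices are exactly the vertices of `E'` not of in- and
out-degree `1`; hence there are at most two embedded trees. In a triangle `t, s, r`, deleting
`(t, r)` or `(s, r)` and suppressing the two vertices left with in- and out-degree `1` gives the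
same tree, in which the parent of `t` is joined to `s` and `s` to the child of `r`.
-/

noncomputable section

namespace Phylo

/-- In-degree of a vertex in a digraph given by an edge relation. -/
def indeg {V : Type} (E : V → V → Prop) (v : V) : ℕ := Nat.card {u // E u v}

/-- Out-degree of a vertex in a digraph given by an edge relation. -/
def outdeg {V : Type} (E : V → V → Prop) (v : V) : ℕ := Nat.card {w // E v w}

def IsRoot {V : Type} (E : V → V → Prop) (v : V) : Prop := indeg E v = 0 ∧ outdeg E v = 1
def IsLeafNode {V : Type} (E : V → V → Prop) (v : V) : Prop := indeg E v = 1 ∧ outdeg E v = 0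
def IsSplit {V : Type} (E : V → V → Prop) (v : V) : Prop := indeg E v = 1 ∧ outdeg E v = 2
def IsRetic {V : Type} (E : V → V → Prop) (v : V) : Prop := indeg E v = 2 ∧ outdeg E v = 1

/-- A directed graph is acyclic if no vertex lies on a directed cycle. -/
def Acyclic {V : Type} (E : V → V → Prop) : Prop := ∀ v, ¬ Relation.TransGen E v v

/-- `(V, E)` together with the leaf-labelling `lab : X → V` is a binary phylogenetic
network on leaf set `X`: an acyclic digraph with a unique root (indeg 0, outdeg 1),
leaves (indeg 1, outdeg 0) bijectively labelled by `X`, and all other nodes split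
nodes (indeg 1, outdeg 2) or reticulations (indeg 2, outdeg 1). -/
structure IsPhyloNet {V X : Type} [Fintype V] (E : V → V → Prop) (lab : X → V) : Prop where
  acyclic : Acyclic E
  root_unique : ∃! v, IsRoot E v
  lab_inj : Function.Injective lab
  leaf_iff : ∀ v, IsLeafNode E v ↔ v ∈ Set.range lab
  node_types : ∀ v, IsRoot E v ∨ IsLeafNode E v ∨ IsSplit E v ∨ IsRetic E v

/-- The reticulation number of a digraph. -/
def reticCount {V : Type} (E : V → V → Prop) : ℕ := Nat.card {v // IsRetic E v}

/-- Labelled isomorphism of leaf-labelled digraphs. -/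
def LabIso {V V' X : Type} (E : V → V → Prop) (lab : X → V)
    (E' : V' → V' → Prop) (lab' : X → V') : Prop :=
  ∃ φ : V ≃ V', (∀ a b, E a b ↔ E' (φ a) (φ b)) ∧ ∀ x, φ (lab x) = lab' x

/-- Result of the head move of the edge `(u,v)` to the edge `(s,t)`, where `p` is the
other parent of the reticulation `v` and `c` its child.  The former head `v` is reused
as the node `v'` subdividing `(s,t)`: we delete `(u,v), (p,v), (v,c), (s,t)`, add
`(p,c)` (suppressing `v`), `(s,v), (v,t)` (subdividing `(s,t)` by `v' = v`), and the
new edge `(u,v') = (u,v)`. -/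
def headMoveEdges {V : Type} (E : V → V → Prop) (u v p c s t : V) : V → V → Prop :=
  fun a b =>
    (E a b ∧ (a, b) ≠ (p, v) ∧ (a, b) ≠ (v, c) ∧ (a, b) ≠ (s, t) ∧ (a, b) ≠ (u, v))
      ∨ (a, b) = (p, c) ∨ (a, b) = (s, v) ∨ (a, b) = (v, t) ∨ (a, b) = (u, v)

/-- Result of the tail move of the edge `(u,v)` to the edge `(s,t)`, where `p` is the
parent of the split node `u` and `c` its other child; `u` is reused as the node `u'`
subdividing `(s,t)`. -/
def tailMoveEdges {V : Type} (E : V → V → Prop) (u v p c s t : V) : V → V → Prop :=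
  fun a b =>
    (E a b ∧ (a, b) ≠ (p, u) ∧ (a, b) ≠ (u, c) ∧ (a, b) ≠ (s, t) ∧ (a, b) ≠ (u, v))
      ∨ (a, b) = (p, c) ∨ (a, b) = (s, u) ∨ (a, b) = (u, t) ∨ (a, b) = (u, v)

/-- A leaf-labelled digraph on a finite vertex set, the carrier for phylogenetic
networks on leaf set `X`. -/
structure Net (X : Type) where
  V : Type
  fin : Fintype V
  E : V → V → Prop
  lab : X → V

attribute [instance] Net.fin

/-- `N` is a binary phylogenetic network. -/
def Net.valid {X : Type} (N : Net X) : Prop := IsPhyloNet N.E N.lab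

/-- Labelled isomorphism of two leaf-labelled digraphs. -/
def NetIso {X : Type} (N N' : Net X) : Prop := LabIso N.E N.lab N'.E N'.lab

/-- `N'` is obtained from `N` by one valid head move. -/
def HeadMoveStep {X : Type} (N N' : Net X) : Prop :=
  N.valid ∧ N'.valid ∧ ∃ u v p c s t : N.V,
    N.E u v ∧ N.E p v ∧ p ≠ u ∧ N.E v c ∧ N.E s t ∧
    LabIso (headMoveEdges N.E u v p c s t) N.lab N'.E N'.lab

/-- `N'` is obtained from `N` by one valid tail move. -/
def TailMoveStep {X : Type} (N N' : Net X) : Prop :=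
  N.valid ∧ N'.valid ∧ ∃ u v p c s t : N.V,
    N.E u v ∧ N.E p u ∧ N.E u c ∧ c ≠ v ∧ N.E s t ∧
    LabIso (tailMoveEdges N.E u v p c s t) N.lab N'.E N'.lab

/-- The digraph obtained by subdividing the edge `(s,t)` with a fresh node (`none`). -/
def subdivEdge {V : Type} (E : V → V → Prop) (s t : V) : Option V → Option V → Prop
  | some a, some b => E a b ∧ (a, b) ≠ (s, t)
  | some a, none => a = s
  | none, some b => b = t
  | none, none => False

/-- `N'` is obtained from `N` by one valid distance-`d` head move: after subdividing
the target edge `(s,t)` with a new node `v'`, a shortest path from the old head `v`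
to `v'` in the underlying undirected graph has length at most `d + 1`. -/
def HeadMoveStepD {X : Type} (d : ℕ) (N N' : Net X) : Prop :=
  N.valid ∧ N'.valid ∧ ∃ u v p c s t : N.V,
    N.E u v ∧ N.E p v ∧ p ≠ u ∧ N.E v c ∧ N.E s t ∧
    (SimpleGraph.fromRel (subdivEdge N.E s t)).dist (some v) none ≤ d + 1 ∧
    LabIso (headMoveEdges N.E u v p c s t) N.lab N'.E N'.lab

/-- `N` and `N'` are connected by a finite sequence of `R`-moves (up to labelled
isomorphism, i.e. renaming of vertices). -/
def ConnectedBy {X : Type} (R : Net X → Net X → Prop) (N N' : Net X) : Prop :=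
  Relation.ReflTransGen (fun A B => R A B ∨ NetIso A B) N N'

/-- `N'` can be reached from `N` by at most `n` `R`-moves (up to labelled isomorphism). -/
def stepsLE {X : Type} (R : Net X → Net X → Prop) : ℕ → Net X → Net X → Prop
  | 0, N, N' => NetIso N N'
  | n + 1, N, N' => stepsLE R n N N' ∨ ∃ M, R N M ∧ stepsLE R n M N'

/-- `(V, E)` is a subdivision of `(W, F)` via the injection `φ`: every vertex outside
the image of `φ` is a redundant (indeg 1, outdeg 1) node, and `F a b` holds iff there
is an `E`-path from `φ a` to `φ b` all of whose internal vertices avoid the image. -/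
def IsSubdivision {W V : Type} (F : W → W → Prop) (E : V → V → Prop) (φ : W → V) : Prop :=
  Function.Injective φ ∧
  (∀ v, v ∉ Set.range φ → indeg E v = 1 ∧ outdeg E v = 1) ∧
  (∀ a b, F a b ↔ ∃ l : List V,
      List.Chain E (φ a) (l ++ [φ b]) ∧ ∀ x ∈ l, x ∉ Set.range φ)

/-- A rooted phylogenetic tree on `X`: a phylogenetic network with no reticulations. -/
def IsTree {X : Type} (T : Net X) : Prop := T.valid ∧ reticCount T.E = 0

/-- The tree `T` is embedded in `N`: some `X`-labelled subgraph of `N` is a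
subdivision of `T`. -/
def EmbeddedTree {X : Type} (T N : Net X) : Prop :=
  IsTree T ∧ ∃ (E' : N.V → N.V → Prop) (φ : T.V → N.V),
    (∀ a b, E' a b → N.E a b) ∧ IsSubdivision T.E E' φ ∧ ∀ x, φ (T.lab x) = N.lab x

/-- The digraph contains a triangle `t, s, r` with edges `(t,s), (t,r), (s,r)`. -/
def HasTriangle {V : Type} (E : V → V → Prop) : Prop :=
  ∃ t s r, E t s ∧ E t r ∧ E s r

/-- The network has `k` reticulations at the top, with nodes `c` (child of the root),
`a i`, `b i` for `1 ≤ i ≤ k`. -/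
def ReticsAtTop {V : Type} (E : V → V → Prop) (k : ℕ) (c : V) (a b : ℕ → V) : Prop :=
  (∃ ρ, IsRoot E ρ ∧ E ρ c) ∧ E c (a 1) ∧ E c (b 1) ∧
  (∀ i, 1 ≤ i → i ≤ k → E (a i) (b i) ∧ IsSplit E (a i) ∧ IsRetic E (b i)) ∧
  (∀ i, 1 ≤ i → i < k →
    ((E (a i) (a (i + 1)) ∧ E (b i) (b (i + 1))) ∨
     (E (a i) (b (i + 1)) ∧ E (b i) (a (i + 1)))))

/-- The network has `k` reticulations neatly at the top. -/
def NeatlyAtTop {V : Type} (E : V → V → Prop) (k : ℕ) (c : V) (a b : ℕ → V) : Prop :=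
  (∃ ρ, IsRoot E ρ ∧ E ρ c) ∧ E c (a 1) ∧ E c (b 1) ∧
  (∀ i, 1 ≤ i → i ≤ k → E (a i) (b i) ∧ IsSplit E (a i) ∧ IsRetic E (b i)) ∧
  (∀ i, 1 ≤ i → i < k → E (a i) (a (i + 1)) ∧ E (b i) (b (i + 1)))

section Cardinality

variable {α : Type} {p : α → Prop}

lemma card_subtype_pos [Finite α] {a : α} (ha : p a) : 0 < Nat.card {x // p x} :=
  have : Nonempty {x // p x} := ⟨⟨a, ha⟩⟩
  Finite.card_pos

lemma exists_of_card_subtype_ne_zero (h : Nat.card {x // p x} ≠ 0) : ∃ x, p x :=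
  let ⟨⟨x, hx⟩⟩ := (Nat.card_ne_zero.1 h).1
  ⟨x, hx⟩

lemma card_subtype_eq_zero_iff [Finite α] : Nat.card {x // p x} = 0 ↔ ∀ x, ¬ p x := by
  rw [Finite.card_eq_zero_iff, isEmpty_subtype]

lemma card_subtype_mono [Finite α] {q : α → Prop} (h : ∀ x, p x → q x) :
    Nat.card {x // p x} ≤ Nat.card {x // q x} :=
  Finite.card_le_of_embedding (Subtype.impEmbedding p q h)

lemma existsUnique_of_card_subtype_eq_one (h : Nat.card {x // p x} = 1) : ∃! x, p x := by
  obtain ⟨⟨x, hx⟩, hall⟩ := Nat.card_eq_one_iff_exists.1 h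
  exact ⟨x, hx, fun y hy => congrArg Subtype.val (hall ⟨y, hy⟩)⟩

lemma eq_of_card_subtype_le_one [Finite α] (h : Nat.card {x // p x} ≤ 1) {a b : α}
    (ha : p a) (hb : p b) : a = b :=
  congrArg Subtype.val ((Finite.card_le_one_iff_subsingleton.1 h).elim ⟨a, ha⟩ ⟨b, hb⟩)

lemma two_le_card_subtype [Finite α] {a b : α} (hab : a ≠ b) (ha : p a) (hb : p b) :
    2 ≤ Nat.card {x // p x} :=
  Finite.one_lt_card_iff_nontrivial.2
    ⟨⟨a, ha⟩, ⟨b, hb⟩, fun h => hab (congrArg Subtype.val h)⟩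

lemma exists_pair_of_card_subtype_eq_two (h : Nat.card {x // p x} = 2) :
    ∃ a b, a ≠ b ∧ p a ∧ p b ∧ ∀ c, p c → c = a ∨ c = b := by
  obtain ⟨⟨a, ha⟩, ⟨b, hb⟩, hab, huniv⟩ := Nat.card_eq_two_iff.1 h
  refine ⟨a, b, fun h => hab (Subtype.ext h), ha, hb, fun c hc => ?_⟩
  have : (⟨c, hc⟩ : {x // p x}) ∈ ({⟨a, ha⟩, ⟨b, hb⟩} : Set {x // p x}) :=
    huniv ▸ trivial
  simpa using this

lemma eq_or_eq_of_card_subtype_eq_two (h : Nat.card {x // p x} = 2) {a b c : α} (hab : a ≠ b)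
    (ha : p a) (hb : p b) (hc : p c) : c = a ∨ c = b := by
  obtain ⟨x, y, hxy, -, -, hall⟩ := exists_pair_of_card_subtype_eq_two h
  rcases hall a ha with rfl | rfl <;> rcases hall b hb with rfl | rfl <;>
    rcases hall c hc with rfl | rfl <;> simp_all

end Cardinality

section Digraph

variable {V : Type} {E E' : V → V → Prop} {p q u v w : V}

lemma indeg_mono [Finite V] (h : ∀ a b, E' a b → E a b) (v : V) : indeg E' v ≤ indeg E v :=
  card_subtype_mono fun u => h u v

lemma outdeg_mono [Finite V] (h : ∀ a b, E' a b → E a b) (v : V) : outdeg E' v ≤ outdeg E v :=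
  card_subtype_mono fun w => h v w

lemma indeg_pos [Finite V] (h : E u v) : 0 < indeg E v := card_subtype_pos h

lemma outdeg_pos [Finite V] (h : E v w) : 0 < outdeg E v := card_subtype_pos h

def deleteEdge (E : V → V → Prop) (p q : V) : V → V → Prop :=
  fun a b => E a b ∧ (a, b) ≠ (p, q)

lemma indeg_deleteEdge_of_ne (hv : v ≠ q) : indeg (deleteEdge E p q) v = indeg E v :=
  Nat.card_congr (Equiv.subtypeEquivRight fun u => by simp [deleteEdge, hv])

lemma outdeg_deleteEdge_of_ne (hv : v ≠ p) : outdeg (deleteEdge E p q) v = outdeg E v :=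
  Nat.card_congr (Equiv.subtypeEquivRight fun u => by simp [deleteEdge, hv])

lemma indeg_deleteEdge_add_one [Finite V] (h : E p q) :
    indeg (deleteEdge E p q) q + 1 = indeg E q := by
  have : indeg (deleteEdge E p q) q = ({u | E u q} \ {p}).ncard :=
    Nat.card_congr (Equiv.subtypeEquivRight fun u => by simp [deleteEdge])
  exact this ▸ Set.ncard_sdiff_singleton_add_one (s := {u | E u q}) h

lemma outdeg_deleteEdge_add_one [Finite V] (h : E p q) :
    outdeg (deleteEdge E p q) p + 1 = outdeg E p := by
  have : outdeg (deleteEdge E p q) p = ({w | E p w} \ {q}).ncard :=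
    Nat.card_congr (Equiv.subtypeEquivRight fun w => by simp [deleteEdge])
  exact this ▸ Set.ncard_sdiff_singleton_add_one (s := {w | E p w}) h

lemma degrees_deleteEdge [Finite V] (hp : IsSplit E p) (hq : IsRetic E q) (hpq : E p q) :
    ∀ v ∈ ({p, q} : Set V),
      indeg (deleteEdge E p q) v = 1 ∧ outdeg (deleteEdge E p q) v = 1 := by
  have hne : p ≠ q := fun h => by
    have := hp.1
    have := hq.1
    subst h
    omega
  have := indeg_deleteEdge_add_one hpq
  have := outdeg_deleteEdge_add_one hpq
  simp only [Set.mem_insert_iff, Set.mem_singleton_iff]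
  rintro v (rfl | rfl)
  · exact ⟨(indeg_deleteEdge_of_ne hne).trans hp.1, by have := hp.2; omega⟩
  · exact ⟨by have := hq.1; omega, (outdeg_deleteEdge_of_ne hne.symm).trans hq.2⟩

lemma Acyclic.mono (hE : Acyclic E) (h : ∀ a b, E' a b → E a b) : Acyclic E' :=
  fun v hv => hE v (Relation.TransGen.mono h _ _ hv)

lemma Acyclic.swap (hE : Acyclic E) : Acyclic (Function.swap E) :=
  fun v hv => hE v (Relation.transGen_swap.1 hv)

lemma Acyclic.irrefl (hE : Acyclic E) (v : V) : ¬ E v v :=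
  fun h => hE v (.single h)

lemma Acyclic.asymm (hE : Acyclic E) (h : E u v) : ¬ E v u :=
  fun h' => hE u (.tail (.single h) h')

lemma Acyclic.wellFounded [Finite V] (hE : Acyclic E) : WellFounded (Function.swap E) := by
  have : IsTrans V (Relation.TransGen (Function.swap E)) := ⟨fun _ _ _ => .trans⟩
  have : Std.Irrefl (Relation.TransGen (Function.swap E)) := ⟨hE.swap⟩
  exact Subrelation.wf (fun h => Relation.TransGen.single h)
    (Finite.wellFounded_of_trans_of_irrefl _)

lemma Acyclic.not_deleteEdge (hE : Acyclic E) (hpq : E p q) :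
    ∀ x ∈ ({p, q} : Set V), ∀ y ∈ ({p, q} : Set V), ¬ deleteEdge E p q x y := by
  simp only [Set.mem_insert_iff, Set.mem_singleton_iff]
  rintro x (rfl | rfl) y (rfl | rfl) hxy
  exacts [hE.irrefl _ hxy.1, hxy.2 rfl, hE.asymm hpq hxy.1, hE.irrefl _ hxy.1]

lemma exists_reflTransGen_forall_not (hwf : WellFounded (Function.swap E)) (u : V) :
    ∃ v, Relation.ReflTransGen E u v ∧ ∀ w, ¬ E v w := by
  obtain ⟨v, hv, hmin⟩ := hwf.has_min {v | Relation.ReflTransGen E u v} ⟨u, .refl⟩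
  exact ⟨v, hv, fun w hw => hmin w (hv.tail hw) hw⟩

lemma eq_of_reflTransGen_of_rightUnique (hE : Relator.RightUnique E)
    (hv : Relation.ReflTransGen E u v) (hw : Relation.ReflTransGen E u w)
    (hv' : ∀ x, ¬ E v x) (hw' : ∀ x, ¬ E w x) : v = w := by
  rcases Relation.ReflTransGen.total_of_right_unique hE hv hw with h | h
  · rcases h.cases_head with h | ⟨x, hx, -⟩
    exacts [h, absurd hx (hv' x)]
  · rcases h.cases_head with h | ⟨x, hx, -⟩
    exacts [h.symm, absurd hx (hw' x)]

lemma Acyclic.eq_of_reflTransGen [Finite V] (hE : Acyclic E) (hin : ∀ v, indeg E v ≤ 1)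
    {w₁ w₂ : V} (h₁ : E u w₁) (h₂ : E u w₂)
    (hw₁ : Relation.ReflTransGen E w₁ v) (hw₂ : Relation.ReflTransGen E w₂ v) :
    w₁ = w₂ := by
  have hleft : Relator.RightUnique (Function.swap E) :=
    fun _ _ _ hx hy => eq_of_card_subtype_le_one (hin _) hx hy
  have key {w₁ w₂} (h₁ : E u w₁) (h₂ : E u w₂) (h : Relation.ReflTransGen E w₁ w₂) :
      w₁ = w₂ := by
    rcases h.cases_tail with h | ⟨y, hy, hyw⟩
    · exact h.symm
    · obtain rfl : y = u := hleft hyw h₂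
      exact absurd (Relation.TransGen.head' h₁ hy) (hE y)
  rcases Relation.ReflTransGen.total_of_right_unique hleft
    (Relation.reflTransGen_swap.2 hw₁) (Relation.reflTransGen_swap.2 hw₂) with h | h
  · exact (key h₂ h₁ (Relation.reflTransGen_swap.1 h)).symm
  · exact key h₁ h₂ (Relation.reflTransGen_swap.1 h)

end Digraph

section Subdivision

open Relation

variable {W V : Type} {F : W → W → Prop} {E : V → V → Prop} {φ : W → V}

def stepOutside (E : V → V → Prop) (S : Set V) (x y : V) : Prop := x ∉ S ∧ E x y

lemma exists_isChain_iff_reflTransGen {S : Set V} {u v : V} :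
    (∃ l : List V, (u :: (l ++ [v])).IsChain E ∧ ∀ x ∈ l, x ∉ S) ↔
      ∃ w, E u w ∧ ReflTransGen (stepOutside E S) w v := by
  constructor
  · rintro ⟨l, hl, hS⟩
    induction l generalizing u with
    | nil => exact ⟨v, by simpa using hl, .refl⟩
    | cons x l ih =>
      rw [List.cons_append, List.isChain_cons_cons] at hl
      obtain ⟨w, hxw, hwv⟩ := ih hl.2 fun y hy => hS y (List.mem_cons_of_mem x hy)
      exact ⟨x, hl.1, .head ⟨hS x List.mem_cons_self, hxw⟩ hwv⟩
  · rintro ⟨w, huw, hwv⟩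
    induction hwv using ReflTransGen.head_induction_on generalizing u with
    | refl => exact ⟨[], by simpa using huw, by simp⟩
    | head hstep _ ih =>
      obtain ⟨l, hl, hS⟩ := ih hstep.2
      exact ⟨_ :: l, List.IsChain.cons_cons huw hl, by simpa using ⟨hstep.1, hS⟩⟩

lemma reflTransGen_of_stepOutside {S : Set V} {u v : V}
    (h : ReflTransGen (stepOutside E S) u v) : ReflTransGen E u v :=
  ReflTransGen.mono (fun _ _ h => h.2) _ _ h

namespace IsSubdivision

lemma rel_iff (h : IsSubdivision F E φ) {a b : W} :
    F a b ↔ ∃ w, E (φ a) w ∧ ReflTransGen (stepOutside E (Set.range φ)) w (φ b) :=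
  (h.2.2 a b).trans exists_isChain_iff_reflTransGen

lemma transGen (h : IsSubdivision F E φ) {a b : W} (hab : F a b) : TransGen E (φ a) (φ b) :=
  let ⟨_, hw, hwb⟩ := h.rel_iff.1 hab
  .head' hw (reflTransGen_of_stepOutside hwb)

lemma acyclic (h : IsSubdivision F E φ) (hE : Acyclic E) : Acyclic F :=
  fun a ha => hE (φ a) (TransGen.lift' φ (fun _ _ => h.transGen) _ _ ha)

lemma swap (h : IsSubdivision F E φ) : IsSubdivision (Function.swap F) (Function.swap E) φ := by
  refine ⟨h.1, fun v hv => (h.2.1 v hv).symm, fun a b => (h.2.2 b a).trans ?_⟩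
  have hrev : ∀ {x y : V} (l : List V), (x :: (l ++ [y])).IsChain E ↔
      (y :: (l.reverse ++ [x])).IsChain (Function.swap E) := fun l => by
    rw [← List.isChain_reverse]
    simp
  exact ⟨fun ⟨l, hl, hS⟩ => ⟨l.reverse, (hrev l).1 hl, by simpa using hS⟩,
    fun ⟨l, hl, hS⟩ =>
      ⟨l.reverse, (hrev _).2 (by rwa [List.reverse_reverse]), by simpa using hS⟩⟩

lemma rightUnique (h : IsSubdivision F E φ) [Finite V] :
    Relator.RightUnique (stepOutside E (Set.range φ)) := by
  intro x _ _ hy hz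
  exact eq_of_card_subtype_le_one (h.2.1 x hy.1).2.le hy.2 hz.2

lemma eq_of_reflTransGen (h : IsSubdivision F E φ) [Finite V] {w : V} {b₁ b₂ : W}
    (h₁ : ReflTransGen (stepOutside E (Set.range φ)) w (φ b₁))
    (h₂ : ReflTransGen (stepOutside E (Set.range φ)) w (φ b₂)) : b₁ = b₂ :=
  h.1 <| eq_of_reflTransGen_of_rightUnique h.rightUnique h₁ h₂
    (fun _ hx => hx.1 ⟨b₁, rfl⟩) (fun _ hx => hx.1 ⟨b₂, rfl⟩)

lemma exists_reflTransGen (h : IsSubdivision F E φ) [Finite V] (hE : Acyclic E) (w : V) :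
    ∃ b, ReflTransGen (stepOutside E (Set.range φ)) w (φ b) := by
  obtain ⟨m, hm, hterm⟩ :=
    exists_reflTransGen_forall_not
      (hE.mono (E' := stepOutside E (Set.range φ)) fun _ _ h => h.2).wellFounded w
  by_cases hmφ : m ∈ Set.range φ
  · obtain ⟨b, rfl⟩ := hmφ
    exact ⟨b, hm⟩
  · have hout : outdeg E m = 1 := (h.2.1 m hmφ).2
    obtain ⟨c, hc⟩ := exists_of_card_subtype_ne_zero (p := E m) (by rw [← outdeg, hout]; simp)
    exact absurd ⟨hmφ, hc⟩ (hterm c)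

lemma outdeg_le (h : IsSubdivision F E φ) [Finite V] (a : W) : outdeg F a ≤ outdeg E (φ a) := by
  choose w hw hwb using fun b : {b // F a b} => h.rel_iff.1 b.2
  refine Nat.card_le_card_of_injective (fun b => ⟨w b, hw b⟩) fun b₁ b₂ heq => ?_
  have heq : w b₁ = w b₂ := congrArg Subtype.val heq
  exact Subtype.ext (h.eq_of_reflTransGen (heq ▸ hwb b₁) (hwb b₂))

lemma indeg_le (h : IsSubdivision F E φ) [Finite V] (b : W) : indeg F b ≤ indeg E (φ b) :=
  h.swap.outdeg_le b

lemma outdeg_eq_zero_iff (h : IsSubdivision F E φ) [Finite V] (hE : Acyclic E) (a : W) :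
    outdeg F a = 0 ↔ outdeg E (φ a) = 0 := by
  have : Finite W := Finite.of_injective φ h.1
  simp only [outdeg, card_subtype_eq_zero_iff]
  refine ⟨fun hF w hw => ?_, fun hE' b hb => ?_⟩
  · obtain ⟨b, hb⟩ := h.exists_reflTransGen hE w
    exact hF b (h.rel_iff.2 ⟨w, hw, hb⟩)
  · obtain ⟨w, hw, -⟩ := h.rel_iff.1 hb
    exact hE' w hw

lemma indeg_eq_zero_iff (h : IsSubdivision F E φ) [Finite V] (hE : Acyclic E) (b : W) :
    indeg F b = 0 ↔ indeg E (φ b) = 0 :=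
  h.swap.outdeg_eq_zero_iff hE.swap b

lemma outdeg_eq (h : IsSubdivision F E φ) [Finite V] (hE : Acyclic E)
    (hin : ∀ v, indeg E v ≤ 1) (a : W) : outdeg F a = outdeg E (φ a) := by
  refine (h.outdeg_le a).antisymm ?_
  have : Finite W := Finite.of_injective φ h.1
  choose b hb using fun w : {w // E (φ a) w} => h.exists_reflTransGen hE w
  refine Nat.card_le_card_of_injective (fun w => ⟨b w, h.rel_iff.2 ⟨w, w.2, hb w⟩⟩)
    fun w₁ w₂ heq => Subtype.ext ?_
  have heq : b w₁ = b w₂ := congrArg Subtype.val heq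
  exact hE.eq_of_reflTransGen hin w₁.2 w₂.2 (reflTransGen_of_stepOutside (heq ▸ hb w₁))
    (reflTransGen_of_stepOutside (hb w₂))

lemma indeg_eq (h : IsSubdivision F E φ) [Finite V] (hE : Acyclic E)
    (hin : ∀ v, indeg E v ≤ 1) (b : W) : indeg F b = indeg E (φ b) := by
  have := h.indeg_le b
  have := h.indeg_eq_zero_iff hE b
  have := hin (φ b)
  omega

lemma range_eq (h : IsSubdivision F E φ) [Finite V] (hE : Acyclic E)
    (hF : ∀ a, ¬ (indeg F a = 1 ∧ outdeg F a = 1)) :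
    Set.range φ = {v | ¬ (indeg E v = 1 ∧ outdeg E v = 1)} := by
  ext v
  refine ⟨?_, fun hv => by_contra fun hvφ => hv (h.2.1 v hvφ)⟩
  rintro ⟨a, rfl⟩ ⟨hin, hout⟩
  have := h.indeg_le a
  have := h.outdeg_le a
  have := h.indeg_eq_zero_iff hE a
  have := h.outdeg_eq_zero_iff hE a
  exact hF a ⟨by omega, by omega⟩

lemma labIso {X W' : Type} {F' : W' → W' → Prop} {φ' : W' → V} {lab : X → W}
    {lab' : X → W'}
    (h : IsSubdivision F E φ) (h' : IsSubdivision F' E φ') (hrange : Set.range φ = Set.range φ')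
    (hlab : ∀ x, φ (lab x) = φ' (lab' x)) : LabIso F lab F' lab' := by
  let e : W ≃ W' := (Equiv.ofInjective φ h.1).trans
    ((Equiv.setCongr hrange).trans (Equiv.ofInjective φ' h'.1).symm)
  have he : ∀ a, φ' (e a) = φ a := fun a => by simp [e, Equiv.apply_ofInjective_symm]
  refine ⟨e, fun a b => ?_, fun x => h'.1 (by rw [he, hlab])⟩
  rw [h.2.2, h'.2.2, he, he, hrange]

end IsSubdivision

lemma isSubdivision_of_independent {S : Set V} (hφ : Function.Injective φ)
    (hS : ∀ v, v ∉ Set.range φ ↔ v ∈ S)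
    (hdeg : ∀ v ∈ S, indeg E v = 1 ∧ outdeg E v = 1)
    (hind : ∀ x ∈ S, ∀ y ∈ S, ¬ E x y)
    (hF : ∀ a b, F a b ↔ E (φ a) (φ b) ∨ ∃ x ∈ S, E (φ a) x ∧ E x (φ b)) :
    IsSubdivision F E φ := by
  refine ⟨hφ, fun v hv => hdeg v ((hS v).1 hv), fun a b => (hF a b).trans ⟨?_, ?_⟩⟩
  · rintro (hab | ⟨x, hx, hax, hxb⟩)
    · exact ⟨[], List.isChain_pair.2 hab, by simp⟩
    · exact ⟨[x], List.IsChain.cons_cons hax (List.isChain_pair.2 hxb),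
        by simpa using (hS x).2 hx⟩
  · rintro ⟨_ | ⟨x, _ | ⟨y, l⟩⟩, hc, hl⟩ <;> replace hc : List.IsChain E _ := hc
    · exact Or.inl (List.isChain_pair.1 hc)
    · simp only [List.cons_append, List.nil_append, List.isChain_cons_cons] at hc
      exact Or.inr ⟨x, (hS x).1 (hl x List.mem_cons_self), hc.1, hc.2.1⟩
    · simp only [List.cons_append, List.isChain_cons_cons] at hc
      exact absurd hc.2.1 (hind x ((hS x).1 (hl x (by simp))) y ((hS y).1 (hl y (by simp))))

end Subdivision

namespace IsPhyloNet

variable {V X : Type} [Fintype V] {E : V → V → Prop} {lab : X → V} {u v w : V}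

lemma not_indeg_eq_one_and_outdeg_eq_one (hN : IsPhyloNet E lab) (v : V) :
    ¬ (indeg E v = 1 ∧ outdeg E v = 1) := by
  rcases hN.node_types v with ⟨_, _⟩ | ⟨_, _⟩ | ⟨_, _⟩ | ⟨_, _⟩ <;> omega

lemma isRoot_of_indeg_eq_zero (hN : IsPhyloNet E lab) (hv : indeg E v = 0) : IsRoot E v := by
  rcases hN.node_types v with h | ⟨_, _⟩ | ⟨_, _⟩ | ⟨_, _⟩
  exacts [h, by omega, by omega, by omega]

lemma isRetic_of_two_le_indeg (hN : IsPhyloNet E lab) (hv : 2 ≤ indeg E v) : IsRetic E v := by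
  rcases hN.node_types v with ⟨_, _⟩ | ⟨_, _⟩ | ⟨_, _⟩ | h
  exacts [by omega, by omega, by omega, h]

lemma indeg_le_one (hN : IsPhyloNet E lab) (hv : ¬ IsRetic E v) : indeg E v ≤ 1 :=
  not_lt.1 fun h => hv (hN.isRetic_of_two_le_indeg h)

lemma isSplit_of_two_le_outdeg (hN : IsPhyloNet E lab) (hv : 2 ≤ outdeg E v) : IsSplit E v := by
  rcases hN.node_types v with ⟨_, _⟩ | ⟨_, _⟩ | h | ⟨_, _⟩
  exacts [by omega, by omega, h, by omega]

lemma isSplit_of_edges (hN : IsPhyloNet E lab) (hu : E u v) (hw : E v w) (hv : ¬ IsRetic E v) :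
    IsSplit E v := by
  have := indeg_pos hu
  have := outdeg_pos hw
  rcases hN.node_types v with ⟨_, _⟩ | ⟨_, _⟩ | h | h
  exacts [by omega, by omega, h, absurd h hv]

lemma indeg_lab (hN : IsPhyloNet E lab) (x : X) : indeg E (lab x) = 1 :=
  ((hN.leaf_iff _).2 ⟨x, rfl⟩).1

lemma lab_ne (hN : IsPhyloNet E lab) (hv : outdeg E v ≠ 0) (x : X) : lab x ≠ v :=
  fun h => hv (h ▸ ((hN.leaf_iff _).2 ⟨x, rfl⟩).2)

end IsPhyloNet

section Embedding

variable {X : Type}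

lemma IsTree.not_isRetic {T : Net X} (hT : IsTree T) (v : T.V) : ¬ IsRetic T.E v :=
  card_subtype_eq_zero_iff.1 hT.2 v

lemma isTree_of_degrees {T N : Net X} (hN : N.valid) {f : T.V → N.V}
    (hf : Function.Injective f) (hT : Acyclic T.E)
    (hin : ∀ a, indeg T.E a = indeg N.E (f a)) (hout : ∀ a, outdeg T.E a = outdeg N.E (f a))
    (hlab : ∀ x, f (T.lab x) = N.lab x) (hroot : ∀ v, IsRoot N.E v → v ∈ Set.range f)
    (hret : ∀ a, ¬ IsRetic N.E (f a)) : IsTree T := by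
  have hiff : ∀ a, (IsRoot T.E a ↔ IsRoot N.E (f a)) ∧
      (IsLeafNode T.E a ↔ IsLeafNode N.E (f a)) ∧ (IsSplit T.E a ↔ IsSplit N.E (f a)) ∧
      (IsRetic T.E a ↔ IsRetic N.E (f a)) := fun a => by
    simp only [IsRoot, IsLeafNode, IsSplit, IsRetic, hin, hout, and_self]
  obtain ⟨ρ, hρ, hρu⟩ := hN.root_unique
  obtain ⟨r, rfl⟩ := hroot ρ hρ
  refine ⟨⟨hT, ⟨r, (hiff r).1.2 hρ, fun a ha => hf (hρu _ ((hiff a).1.1 ha))⟩,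
    fun x y hxy => hN.lab_inj (by rw [← hlab, ← hlab, hxy]), fun a => ?_, fun a => ?_⟩,
    card_subtype_eq_zero_iff.2 fun a ha => hret a ((hiff a).2.2.2.1 ha)⟩
  · rw [(hiff a).2.1, hN.leaf_iff]
    exact ⟨fun ⟨x, hx⟩ => ⟨x, hf (by rw [hlab, hx])⟩,
      fun ⟨x, hx⟩ => ⟨x, by rw [← hx, hlab]⟩⟩
  · rcases hN.node_types (f a) with h | h | h | h
    · exact Or.inl ((hiff a).1.2 h)
    · exact Or.inr (Or.inl ((hiff a).2.1.2 h))
    · exact Or.inr (Or.inr (Or.inl ((hiff a).2.2.1.2 h)))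
    · exact absurd h (hret a)

def EmbedsVia (T N : Net X) (E' : N.V → N.V → Prop) : Prop :=
  ∃ φ : T.V → N.V, (∀ a b, E' a b → N.E a b) ∧ IsSubdivision T.E E' φ ∧
    ∀ x, φ (T.lab x) = N.lab x

namespace EmbedsVia

variable {T T' N : Net X} {E' : N.V → N.V → Prop}

lemma le (h : EmbedsVia T N E') : ∀ a b, E' a b → N.E a b :=
  let ⟨_, hsub, _⟩ := h
  hsub

lemma netIso (hN : Acyclic N.E) (hT : T.valid) (hT' : T'.valid) (h : EmbedsVia T N E')
    (h' : EmbedsVia T' N E') : NetIso T T' := by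
  obtain ⟨φ, hsub, hφ, hlab⟩ := h
  obtain ⟨φ', -, hφ', hlab'⟩ := h'
  have hE' : Acyclic E' := hN.mono hsub
  refine hφ.labIso hφ' ?_ fun x => by rw [hlab, hlab']
  rw [hφ.range_eq hE' hT.not_indeg_eq_one_and_outdeg_eq_one,
    hφ'.range_eq hE' hT'.not_indeg_eq_one_and_outdeg_eq_one]

/-- A vertex with two parents in `E'` is a reticulation of `N`; its single child forces its
preimage to be a leaf, which has one parent. -/
lemma indeg_le_one (hN : N.valid) (hT : IsTree T) (h : EmbedsVia T N E') (v : N.V) :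
    indeg E' v ≤ 1 := by
  obtain ⟨φ, hsub, hφ, hlab⟩ := h
  by_cases hv : v ∈ Set.range φ
  swap
  · exact (hφ.2.1 v hv).1.le
  obtain ⟨b, rfl⟩ := hv
  by_contra! h2
  have hret : IsRetic N.E (φ b) := hN.isRetic_of_two_le_indeg (h2.trans_le (indeg_mono hsub _))
  have hout : outdeg T.E b ≤ 1 := (hφ.outdeg_le b).trans ((outdeg_mono hsub _).trans hret.2.le)
  have hin : indeg T.E b ≠ 0 := fun h0 => by
    have := (hφ.indeg_eq_zero_iff (hN.acyclic.mono hsub) b).1 h0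
    omega
  rcases hT.1.node_types b with hb | hb | hb | hb
  · exact hin hb.1
  · obtain ⟨x, rfl⟩ := (hT.1.leaf_iff b).1 hb
    have := hN.indeg_lab x
    have := indeg_mono hsub (N.lab x)
    rw [hlab] at h2
    omega
  · have := hb.2
    omega
  · exact hT.not_isRetic b hb

lemma exists_parent (hN : N.valid) (hT : IsTree T) (h : EmbedsVia T N E') {u v : N.V}
    (huv : N.E u v) : ∃ u', E' u' v := by
  obtain ⟨φ, hsub, hφ, -⟩ := h
  have hroot : ∀ w, indeg E' w = 0 → ∃ a, φ a = w ∧ IsRoot T.E a := by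
    intro w hw
    have : w ∈ Set.range φ := by_contra fun hn => by
      have := (hφ.2.1 w hn).1
      omega
    obtain ⟨a, rfl⟩ := this
    exact ⟨a, rfl, hT.1.isRoot_of_indeg_eq_zero
      ((hφ.indeg_eq_zero_iff (hN.acyclic.mono hsub) a).2 hw)⟩
  by_contra! hnone
  obtain ⟨a, rfl, ha⟩ := hroot v (card_subtype_eq_zero_iff.2 hnone)
  obtain ⟨ρ, hρ, -⟩ := hN.root_unique
  obtain ⟨a', rfl, ha'⟩ := hroot ρ (Nat.eq_zero_of_le_zero (hρ.1 ▸ indeg_mono hsub _))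
  obtain rfl : a = a' := hT.1.root_unique.unique ha ha'
  have := indeg_pos huv
  have := hρ.1
  omega

end EmbedsVia

lemma exists_eq_deleteEdge {V : Type} [Finite V] {E E' : V → V → Prop} {r : V}
    (hsub : ∀ a b, E' a b → E a b) (hpar : ∀ u v, E u v → ∃ u', E' u' v)
    (hle : ∀ v, indeg E' v ≤ 1) (hin : ∀ v, v ≠ r → indeg E v ≤ 1)
    (hr : indeg E r = 2) : ∃ p, E p r ∧ E' = deleteEdge E p r := by
  have : Nontrivial {x // E x r} :=
    Finite.one_lt_card_iff_nontrivial.1 (by rw [← indeg, hr]; omega)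
  obtain ⟨⟨q, hq⟩⟩ := (inferInstance : Nonempty {x // E x r})
  obtain ⟨u, hu⟩ := hpar q r hq
  obtain ⟨⟨p, hp⟩, hp_ne⟩ := exists_ne (⟨u, hsub _ _ hu⟩ : {x // E x r})
  have hpu : p ≠ u := fun h => hp_ne (Subtype.ext h)
  refine ⟨p, hp, funext fun a => funext fun b =>
    propext ⟨fun hab => ⟨hsub _ _ hab, ?_⟩, ?_⟩⟩
  · rintro ⟨rfl, rfl⟩
    exact hpu (eq_of_card_subtype_le_one (hle _) hab hu)
  · rintro ⟨hab, hne⟩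
    obtain ⟨u', hu'⟩ := hpar a b hab
    by_cases hb : b = r
    · subst hb
      rcases eq_or_eq_of_card_subtype_eq_two hr hpu.symm (hsub _ _ hu) hp hab with rfl | rfl
      exacts [hu, absurd rfl hne]
    · rwa [eq_of_card_subtype_le_one (hin b hb) hab (hsub _ _ hu')]

lemma EmbeddedTree.exists_embedsVia_deleteEdge {T N : Net X} {r : N.V} (hN : N.valid)
    (hr : IsRetic N.E r) (hr_unique : ∀ v, IsRetic N.E v → v = r) (hT : EmbeddedTree T N) :
    ∃ p, N.E p r ∧ EmbedsVia T N (deleteEdge N.E p r) := by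
  obtain ⟨hT, E', h⟩ := hT
  have h : EmbedsVia T N E' := h
  obtain ⟨p, hp, rfl⟩ := exists_eq_deleteEdge h.le
    (fun _ _ huv => h.exists_parent hN hT huv) (h.indeg_le_one hN hT)
    (fun v hv => hN.indeg_le_one fun h => hv (hr_unique v h)) hr.1
  exact ⟨p, hp, h⟩

structure IsTierOneTriangle (N : Net X) (t s r : N.V) : Prop where
  valid : N.valid
  tierOne : reticCount N.E = 1
  ts : N.E t s
  tr : N.E t r
  sr : N.E s r

namespace IsTierOneTriangle

variable {N : Net X} {t s r a b : N.V}

lemma ne_ts (h : IsTierOneTriangle N t s r) : t ≠ s :=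
  fun hts => h.valid.acyclic.irrefl t (hts ▸ h.ts)

lemma ne_tr (h : IsTierOneTriangle N t s r) : t ≠ r :=
  fun htr => h.valid.acyclic.irrefl t (htr ▸ h.tr)

lemma ne_sr (h : IsTierOneTriangle N t s r) : s ≠ r :=
  fun hsr => h.valid.acyclic.irrefl s (hsr ▸ h.sr)

lemma isRetic (h : IsTierOneTriangle N t s r) : IsRetic N.E r :=
  h.valid.isRetic_of_two_le_indeg (two_le_card_subtype h.ne_ts h.tr h.sr)

lemma eq_of_isRetic (h : IsTierOneTriangle N t s r) (hv : IsRetic N.E a) : a = r :=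
  eq_of_card_subtype_le_one h.tierOne.le hv h.isRetic

lemma isSplit_t (h : IsTierOneTriangle N t s r) : IsSplit N.E t :=
  h.valid.isSplit_of_two_le_outdeg (two_le_card_subtype h.ne_sr h.ts h.tr)

lemma isSplit_s (h : IsTierOneTriangle N t s r) : IsSplit N.E s :=
  h.valid.isSplit_of_edges h.ts h.sr fun hs => h.ne_sr (h.eq_of_isRetic hs)

lemma eq_of_parent_r (h : IsTierOneTriangle N t s r) (ha : N.E a r) : a = t ∨ a = s :=
  eq_or_eq_of_card_subtype_eq_two h.isRetic.1 h.ne_ts h.tr h.sr ha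

lemma eq_of_child_t (h : IsTierOneTriangle N t s r) (hb : N.E t b) : b = s ∨ b = r :=
  eq_or_eq_of_card_subtype_eq_two h.isSplit_t.2 h.ne_sr h.ts h.tr hb

lemma eq_of_parent_s (h : IsTierOneTriangle N t s r) (ha : N.E a s) : a = t :=
  eq_of_card_subtype_le_one h.isSplit_s.1.le ha h.ts

lemma lab_ne (h : IsTierOneTriangle N t s r) (x : X) :
    N.lab x ≠ t ∧ N.lab x ≠ r ∧ N.lab x ≠ s := by
  refine ⟨h.valid.lab_ne ?_ x, h.valid.lab_ne ?_ x, h.valid.lab_ne ?_ x⟩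
  · exact (outdeg_pos h.ts).ne'
  · rw [h.isRetic.2]; omega
  · exact (outdeg_pos h.sr).ne'

/-- The tree obtained by deleting `(t, r)` and suppressing `t` and `r`. -/
def tree (h : IsTierOneTriangle N t s r) : Net X where
  V := {v : N.V // v ≠ t ∧ v ≠ r}
  fin := Fintype.ofFinite _
  E a b := N.E a b ∨ (N.E a t ∧ b.1 = s) ∨ (a.1 = s ∧ N.E r b)
  lab x := ⟨N.lab x, (h.lab_ne x).1, (h.lab_ne x).2.1⟩

lemma isSubdivision_t (h : IsTierOneTriangle N t s r) :
    IsSubdivision h.tree.E (deleteEdge N.E t r) Subtype.val := by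
  refine isSubdivision_of_independent (S := {t, r}) Subtype.val_injective ?_
    (degrees_deleteEdge h.isSplit_t h.isRetic h.tr) (h.valid.acyclic.not_deleteEdge h.tr) ?_
  · intro v
    change v ∉ Set.range (Subtype.val : {v : N.V // v ≠ t ∧ v ≠ r} → N.V) ↔ _
    rw [Subtype.range_coe_subtype]
    show ¬ (v ≠ t ∧ v ≠ r) ↔ v = t ∨ v = r
    tauto
  · rintro ⟨a, hat, har⟩ ⟨b, hbt, hbr⟩
    simp only [Set.mem_insert_iff, Set.mem_singleton_iff, exists_eq_or_imp, exists_eq_left]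
    have hb : N.E t b ↔ b = s :=
      ⟨fun hb => (h.eq_of_child_t hb).resolve_right hbr, (· ▸ h.ts)⟩
    have ha : N.E a r ↔ a = s :=
      ⟨fun ha => (h.eq_of_parent_r ha).resolve_left hat, (· ▸ h.sr)⟩
    simp only [tree, deleteEdge, ne_eq, Prod.mk.injEq, hat, hbr, ha, hb, and_false,
      false_and, not_false_eq_true, and_true]

open Classical in
/-- When `(s, r)` is deleted instead of `(t, r)`, the branch vertex `s` of `h.tree` is realised
by `t`. -/
def sToT (h : IsTierOneTriangle N t s r) (a : h.tree.V) : N.V := if a.1 = s then t else a.1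

lemma sToT_of_eq (h : IsTierOneTriangle N t s r) {a : h.tree.V} (ha : a.1 = s) : h.sToT a = t :=
  if_pos ha

lemma sToT_of_ne (h : IsTierOneTriangle N t s r) {a : h.tree.V} (ha : a.1 ≠ s) : h.sToT a = a.1 :=
  if_neg ha

lemma sToT_cases (h : IsTierOneTriangle N t s r) (a : h.tree.V) :
    (a.1 = s ∧ h.sToT a = t) ∨ (a.1 ≠ s ∧ h.sToT a = a.1) := by
  by_cases ha : a.1 = s
  exacts [Or.inl ⟨ha, h.sToT_of_eq ha⟩, Or.inr ⟨ha, h.sToT_of_ne ha⟩]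

lemma sToT_injective (h : IsTierOneTriangle N t s r) : Function.Injective h.sToT := by
  intro a b hab
  have := a.2
  have := b.2
  rcases h.sToT_cases a with ⟨ha, ha'⟩ | ⟨ha, ha'⟩ <;>
    rcases h.sToT_cases b with ⟨hb, hb'⟩ | ⟨hb, hb'⟩ <;> exact Subtype.ext (by grind)

lemma notMem_range_sToT_iff (h : IsTierOneTriangle N t s r) {v : N.V} :
    v ∉ Set.range h.sToT ↔ v = s ∨ v = r := by
  simp only [Set.mem_range, not_exists]
  refine ⟨fun hv => ?_, fun hv a ha => ?_⟩
  · by_contra! hne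
    by_cases hvt : v = t
    · exact hv ⟨s, h.ne_ts.symm, h.ne_sr⟩ ((h.sToT_of_eq rfl).trans hvt.symm)
    · exact hv ⟨v, hvt, hne.2⟩ (h.sToT_of_ne hne.1)
  · have := a.2
    have := h.ne_ts
    have := h.ne_tr
    rcases h.sToT_cases a with ⟨ha, ha'⟩ | ⟨ha, ha'⟩ <;> grind

lemma isSubdivision_s (h : IsTierOneTriangle N t s r) :
    IsSubdivision h.tree.E (deleteEdge N.E s r) h.sToT := by
  refine isSubdivision_of_independent (S := {s, r}) h.sToT_injective
    (fun v => h.notMem_range_sToT_iff) (degrees_deleteEdge h.isSplit_s h.isRetic h.sr)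
    (h.valid.acyclic.not_deleteEdge h.sr) fun a b => ?_
  simp only [Set.mem_insert_iff, Set.mem_singleton_iff, exists_eq_or_imp, exists_eq_left]
  have hacyc := h.valid.acyclic
  rcases h.sToT_cases a with ⟨ha, ha'⟩ | ⟨ha, ha'⟩ <;>
    rcases h.sToT_cases b with ⟨hb, hb'⟩ | ⟨hb, hb'⟩ <;>
    simp only [tree, deleteEdge, ne_eq, Prod.mk.injEq, ha', hb', ha, hb] <;>
    grind [a.2, b.2, h.ts, h.tr, h.sr, hacyc.irrefl, hacyc.asymm h.ts, hacyc.asymm h.tr,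
      hacyc.asymm h.sr, h.eq_of_parent_s, h.eq_of_parent_r, h.eq_of_child_t]

lemma isTree (h : IsTierOneTriangle N t s r) : IsTree h.tree := by
  have hacyc : Acyclic (deleteEdge N.E t r) := h.valid.acyclic.mono fun _ _ h => h.1
  have hin : ∀ v, indeg (deleteEdge N.E t r) v ≤ 1 := fun v => by
    by_cases hv : v = r
    · exact (degrees_deleteEdge h.isSplit_t h.isRetic h.tr v (by simp [hv])).1.le
    · exact (indeg_deleteEdge_of_ne hv).trans_le
        (h.valid.indeg_le_one fun hr => hv (h.eq_of_isRetic hr))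
  refine isTree_of_degrees h.valid Subtype.val_injective (h.isSubdivision_t.acyclic hacyc)
    (fun a => (h.isSubdivision_t.indeg_eq hacyc hin a).trans (indeg_deleteEdge_of_ne a.2.2))
    (fun a => (h.isSubdivision_t.outdeg_eq hacyc hin a).trans (outdeg_deleteEdge_of_ne a.2.1))
    (fun _ => rfl) (fun v hv => ?_) (fun a hr => a.2.2 (h.eq_of_isRetic hr))
  have hvt : v ≠ t := by rintro rfl; exact absurd (hv.1.symm.trans h.isSplit_t.1) (by decide)
  have hvr : v ≠ r := by rintro rfl; exact absurd (hv.1.symm.trans h.isRetic.1) (by decide)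
  exact ⟨(⟨v, hvt, hvr⟩ : {v : N.V // v ≠ t ∧ v ≠ r}), rfl⟩

lemma embedsVia_deleteEdge (h : IsTierOneTriangle N t s r) {p : N.V} (hp : N.E p r) :
    EmbedsVia h.tree N (deleteEdge N.E p r) := by
  rcases h.eq_of_parent_r hp with rfl | rfl
  · exact ⟨Subtype.val, fun _ _ hab => hab.1, h.isSubdivision_t, fun _ => rfl⟩
  · exact ⟨h.sToT, fun _ _ hab => hab.1, h.isSubdivision_s,
      fun x => h.sToT_of_ne (h.lab_ne x).2.2⟩

end IsTierOneTriangle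

end Embedding

/-- a tier-1 network has at most two embedded trees (up to labelled
isomorphism), and exactly one if it contains a triangle. -/
theorem tier1_embedded_trees {X : Type} (N : Net X) (hN : N.valid)
    (h1 : reticCount N.E = 1) :
    (∃ T₁ T₂ : Net X, ∀ T : Net X, EmbeddedTree T N → NetIso T T₁ ∨ NetIso T T₂) ∧
    (HasTriangle N.E →
      ∃ T : Net X, EmbeddedTree T N ∧ ∀ T' : Net X, EmbeddedTree T' N → NetIso T' T) := by
  constructor
  · obtain ⟨r, hr, hr_unique⟩ := existsUnique_of_card_subtype_eq_one h1
    obtain ⟨q₁, q₂, -, -, -, hq⟩ := exists_pair_of_card_subtype_eq_two hr.1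
    have : Nonempty (Net X) := ⟨N⟩
    let P q T := IsTree T ∧ EmbedsVia T N (deleteEdge N.E q r)
    refine ⟨Classical.epsilon (P q₁), Classical.epsilon (P q₂), fun T hT => ?_⟩
    obtain ⟨p, hp, hTp⟩ := hT.exists_embedsVia_deleteEdge hN hr hr_unique
    have hrep : P p (Classical.epsilon (P p)) := Classical.epsilon_spec ⟨T, hT.1, hTp⟩
    have hiso := hTp.netIso hN.acyclic hT.1.1 hrep.1.1 hrep.2
    rcases hq p hp with rfl | rfl
    exacts [Or.inl hiso, Or.inr hiso]
  · rintro ⟨t, s, r, hts, htr, hsr⟩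
    have h := IsTierOneTriangle.mk hN h1 hts htr hsr
    refine ⟨h.tree, ⟨h.isTree, _, h.embedsVia_deleteEdge htr⟩, fun T hT => ?_⟩
    obtain ⟨p, hp, hTp⟩ := hT.exists_embedsVia_deleteEdge hN h.isRetic fun _ => h.eq_of_isRetic
    exact hTp.netIso hN.acyclic hT.1.1 h.isTree.1 (h.embedsVia_deleteEdge hp)

end Phylo
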